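/- arXiv:2204.11140 — 2 statements merged into one kernel-verified Lean document; each statement's English description precedes it below -/
import Mathlib

section
/- Let s > 0. Suppose for each k the reals s_{k,1}, ..., s_{k,k} in [0,1] satisfy sum_{j=1}^k s_{k,j} = s and max_j |s_{k,j}| -> 0 as k -> infinity. Then for a fixed probability measure x on the nonnegative integers with finite mean rho = rho_1(x) >= 0, the product prod_{j=1}^k psi_{s_{k,j}}(x) converges to exp(-s * rho) as k -> infinity, where psi_s(x) = sum_i x_i (1-s)^i. -/
open Filter

set_option maxHeartbeats 1000000

private lemma exp_quad {u : ℝ} (h0 : 0 ≤ u) (h1 : u ≤ 1) :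
    Real.exp (-u) ≤ 1 - u + u ^ 2 := by
  have := Real.abs_exp_sub_one_sub_id_le (x := -u) (by rw [abs_neg, abs_of_nonneg h0]; exact h1)
  rw [abs_le] at this
  nlinarith [this.2]

private lemma pow_le_exp {t : ℝ} (ht1 : t ≤ 1) (i : ℕ) :
    (1 - t) ^ i ≤ Real.exp (-((i : ℝ) * t)) := by
  have h1 : (1 - t) ≤ Real.exp (-t) := by
    have := Real.add_one_le_exp (-t); linarith
  calc (1 - t) ^ i ≤ (Real.exp (-t)) ^ i := pow_le_pow_left₀ (by linarith) h1 i
    _ = Real.exp ((i : ℝ) * (-t)) := (Real.exp_nat_mul _ i).symm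
    _ = Real.exp (-((i : ℝ) * t)) := by ring_nf

private lemma psi_summable {x : ℕ → ℝ} (hnn : ∀ k : ℕ, 0 ≤ x k) (hx : Summable x)
    {t : ℝ} (ht0 : 0 ≤ t) (ht1 : t ≤ 1) : Summable (fun i : ℕ => x i * (1 - t) ^ i) := by
  refine Summable.of_nonneg_of_le (fun i => ?_) (fun i => ?_) hx
  · exact mul_nonneg (hnn i) (pow_nonneg (by linarith) i)
  · calc x i * (1 - t) ^ i ≤ x i * 1 :=
        mul_le_mul_of_nonneg_left (pow_le_one₀ (by linarith) (by linarith)) (hnn i)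
    _ = x i := mul_one _

private lemma psi_upper {x : ℕ → ℝ} (hnn : ∀ k : ℕ, 0 ≤ x k) (hx : Summable x)
    (hsum : ∑' k : ℕ, x k = 1) (hmean : Summable (fun k : ℕ => (k : ℝ) * x k))
    {ε : ℝ} (hε : 0 < ε) :
    ∃ δ : ℝ, 0 < δ ∧ δ ≤ 1 ∧ ∀ t : ℝ, 0 ≤ t → t ≤ δ →
      ∑' i : ℕ, x i * (1 - t) ^ i ≤ 1 - t * ((∑' i : ℕ, (i : ℝ) * x i) - ε) := by
  set ρ : ℝ := ∑' i : ℕ, (i : ℝ) * x i with hρdef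
  have hρ0 : 0 ≤ ρ := tsum_nonneg fun i => mul_nonneg (Nat.cast_nonneg i) (hnn i)
  -- choose N with partial sum close to ρ
  obtain ⟨N, hN⟩ : ∃ N : ℕ, ρ - ε / 2 < ∑ i ∈ Finset.range N, (i : ℝ) * x i := by
    have := hmean.hasSum.tendsto_sum_nat.eventually (eventually_gt_nhds (show ρ - ε / 2 < ρ by linarith))
    exact this.exists
  set M : ℕ := N + 1 with hMdef
  have hSmono : ∑ i ∈ Finset.range N, (i : ℝ) * x i ≤ ∑ i ∈ Finset.range M, (i : ℝ) * x i := by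
    apply Finset.sum_le_sum_of_subset_of_nonneg (Finset.range_subset_range.2 (Nat.le_succ N))
    exact fun i _ _ => mul_nonneg (Nat.cast_nonneg i) (hnn i)
  set S : ℝ := ∑ i ∈ Finset.range M, (i : ℝ) * x i with hSdef
  have hSρ : S ≤ ρ := Summable.sum_le_tsum _ (fun i _ => mul_nonneg (Nat.cast_nonneg i) (hnn i)) hmean
  have hSlo : ρ - ε / 2 < S := lt_of_lt_of_le hN hSmono
  have hS0 : 0 ≤ S := Finset.sum_nonneg fun i _ => mul_nonneg (Nat.cast_nonneg i) (hnn i)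
  have hM0 : (0 : ℝ) < M := by positivity
  refine ⟨min (1 / M) (ε / (2 * M * ρ + 1)), by positivity, ?_, ?_⟩
  · refine (min_le_left _ _).trans ?_
    rw [div_le_one hM0]; exact_mod_cast Nat.one_le_iff_ne_zero.2 (Nat.succ_ne_zero N)
  intro t ht0 htδ
  have htM : (M : ℝ) * t ≤ 1 := by
    have := htδ.trans (min_le_left _ _)
    rw [le_div_iff₀ hM0] at this; linarith [this]
  have ht1 : t ≤ 1 := by
    nlinarith [hM0, (show (1:ℝ) ≤ M by exact_mod_cast Nat.one_le_iff_ne_zero.2 (Nat.succ_ne_zero N))]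
  have htε : (M : ℝ) * t * ρ ≤ ε / 2 := by
    have h2 : t ≤ ε / (2 * M * ρ + 1) := htδ.trans (min_le_right _ _)
    rw [le_div_iff₀ (by positivity)] at h2
    nlinarith [mul_nonneg (mul_nonneg hM0.le ht0) hρ0]
  -- split the sum
  have hψs : Summable (fun i : ℕ => x i * (1 - t) ^ i) := psi_summable hnn hx ht0 ht1
  have hsplit := Summable.sum_add_tsum_nat_add M hψs
  have hxsplit := Summable.sum_add_tsum_nat_add M hx
  have htail : ∑' i : ℕ, x (i + M) * (1 - t) ^ (i + M) ≤ ∑' i : ℕ, x (i + M) := by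
    refine Summable.tsum_le_tsum (fun i => ?_) ((summable_nat_add_iff M).2 hψs) ((summable_nat_add_iff M).2 hx)
    calc x (i + M) * (1 - t) ^ (i + M) ≤ x (i + M) * 1 :=
        mul_le_mul_of_nonneg_left (pow_le_one₀ (by linarith) (by linarith)) (hnn _)
      _ = x (i + M) := mul_one _
  have hhead : ∑ i ∈ Finset.range M, x i * (1 - t) ^ i
      ≤ ∑ i ∈ Finset.range M, x i * (1 - (i : ℝ) * t + (M : ℝ) * t * ((i : ℝ) * t)) := by
    refine Finset.sum_le_sum fun i hi => ?_
    have hiM : (i : ℝ) ≤ M := by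
      exact_mod_cast Nat.le_of_lt (Finset.mem_range.1 hi)
    have hit1 : (i : ℝ) * t ≤ 1 := le_trans (by nlinarith) htM
    have hit0 : 0 ≤ (i : ℝ) * t := mul_nonneg (Nat.cast_nonneg i) ht0
    have h1 : (1 - t) ^ i ≤ 1 - (i : ℝ) * t + (M : ℝ) * t * ((i : ℝ) * t) := by
      calc (1 - t) ^ i ≤ Real.exp (-((i : ℝ) * t)) := pow_le_exp ht1 i
        _ ≤ 1 - (i : ℝ) * t + ((i : ℝ) * t) ^ 2 := exp_quad hit0 hit1
        _ ≤ 1 - (i : ℝ) * t + (M : ℝ) * t * ((i : ℝ) * t) := by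
            have h2 : (i : ℝ) * t ≤ (M : ℝ) * t := mul_le_mul_of_nonneg_right hiM ht0
            nlinarith [hit0, h2]
    exact mul_le_mul_of_nonneg_left h1 (hnn i)
  have hhead2 : ∑ i ∈ Finset.range M, x i * (1 - (i : ℝ) * t + (M : ℝ) * t * ((i : ℝ) * t))
      = (∑ i ∈ Finset.range M, x i) - t * (1 - (M : ℝ) * t) * S := by
    rw [hSdef, Finset.mul_sum, eq_sub_iff_add_eq, ← Finset.sum_add_distrib]
    refine Finset.sum_congr rfl fun i _ => by ring
  have hxtail : ∑' i : ℕ, x (i + M) = 1 - ∑ i ∈ Finset.range M, x i := by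
    rw [← hsum, ← hxsplit]; ring
  have hkey : ∑' i : ℕ, x i * (1 - t) ^ i ≤ 1 - t * (1 - (M : ℝ) * t) * S := by
    calc ∑' i : ℕ, x i * (1 - t) ^ i
        = (∑ i ∈ Finset.range M, x i * (1 - t) ^ i) + ∑' i : ℕ, x (i + M) * (1 - t) ^ (i + M) :=
          hsplit.symm
      _ ≤ ((∑ i ∈ Finset.range M, x i) - t * (1 - (M : ℝ) * t) * S) + (1 - ∑ i ∈ Finset.range M, x i) := by
          rw [← hhead2]
          exact add_le_add (hhead) (htail.trans_eq hxtail)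
      _ = 1 - t * (1 - (M : ℝ) * t) * S := by ring
  refine hkey.trans ?_
  have h1 : t * (ρ - ε) ≤ t * (1 - (M : ℝ) * t) * S := by
    nlinarith [mul_le_mul_of_nonneg_left hSρ (mul_nonneg (mul_nonneg hM0.le ht0) ht0),
      mul_le_mul_of_nonneg_right htε ht0, mul_le_mul_of_nonneg_left hSlo.le ht0,
      mul_nonneg ht0 hS0]
  linarith

private lemma psi_lower {x : ℕ → ℝ} (hnn : ∀ k : ℕ, 0 ≤ x k) (hx : Summable x)
    (hsum : ∑' k : ℕ, x k = 1) (hmean : Summable (fun k : ℕ => (k : ℝ) * x k))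
    {t : ℝ} (ht0 : 0 ≤ t) (ht1 : t ≤ 1) :
    1 - (∑' i : ℕ, (i : ℝ) * x i) * t ≤ ∑' i : ℕ, x i * (1 - t) ^ i := by
  have hsub : Summable (fun i : ℕ => x i - t * ((i : ℝ) * x i)) := hx.sub (hmean.mul_left t)
  have hterm : ∀ i : ℕ, x i - t * ((i : ℝ) * x i) ≤ x i * (1 - t) ^ i := by
    intro i
    have hb : 1 + (i : ℕ) * (-t) ≤ (1 + (-t)) ^ i := one_add_mul_le_pow (by linarith) i
    calc x i - t * ((i : ℝ) * x i) = x i * (1 + (i : ℝ) * (-t)) := by ring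
      _ ≤ x i * (1 + (-t)) ^ i := mul_le_mul_of_nonneg_left (by exact_mod_cast hb) (hnn i)
      _ = x i * (1 - t) ^ i := by ring_nf
  calc 1 - (∑' i : ℕ, (i : ℝ) * x i) * t
      = ∑' i : ℕ, (x i - t * ((i : ℝ) * x i)) := by
        rw [Summable.tsum_sub hx (hmean.mul_left t), tsum_mul_left, hsum]; ring
    _ ≤ ∑' i : ℕ, x i * (1 - t) ^ i :=
        Summable.tsum_le_tsum hterm hsub (psi_summable hnn hx ht0 ht1)


/-- for an asymptotically negligible triangular array `a k j ∈ [0,1]` with row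
sums `s`, the products `∏ⱼ ψ_{a k j}(x)` converge to `exp(-s ρ₁(x))`. -/
theorem stmt12 (x : ℕ → ℝ) (hnn : ∀ k : ℕ, 0 ≤ x k) (hsum : ∑' k : ℕ, x k = 1)
    (hmean : Summable (fun k : ℕ => (k : ℝ) * x k))
    (s : ℝ) (hs : 0 < s) (a : (k : ℕ) → Fin k → ℝ)
    (ha01 : ∀ k (j : Fin k), a k j ∈ Set.Icc (0 : ℝ) 1)
    (hrow : ∀ k : ℕ, 1 ≤ k → ∑ j : Fin k, a k j = s)
    (hneg : ∀ ε > (0 : ℝ), ∃ K : ℕ, ∀ k ≥ K, ∀ j : Fin k, |a k j| < ε) :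
    Tendsto (fun k : ℕ => ∏ j : Fin k, ∑' i : ℕ, x i * (1 - a k j) ^ i) atTop
      (nhds (Real.exp (-s * ∑' i : ℕ, (i : ℝ) * x i))) := by
  have hx : Summable x := by
    by_contra h
    rw [tsum_eq_zero_of_not_summable h] at hsum
    norm_num at hsum
  set ρ : ℝ := ∑' i : ℕ, (i : ℝ) * x i with hρdef
  have hρ0 : 0 ≤ ρ := tsum_nonneg fun i => mul_nonneg (Nat.cast_nonneg i) (hnn i)
  rw [Metric.tendsto_atTop]
  intro η hη
  set L : ℝ := Real.exp (-s * ρ) with hLdef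
  have hL0 : 0 < L := Real.exp_pos _
  have hL1 : L ≤ 1 := Real.exp_le_one_iff.2 (by nlinarith)
  set ε : ℝ := min (1 / s) (η / (4 * s)) with hεdef
  have hε0 : 0 < ε := lt_min (by positivity) (by positivity)
  have hεs : s * ε ≤ 1 := by
    have h1 : ε ≤ 1 / s := min_le_left _ _
    rw [le_div_iff₀ hs] at h1; linarith
  have hεη : 3 * (s * ε) < η := by
    have h1 : ε ≤ η / (4 * s) := min_le_right _ _
    rw [le_div_iff₀ (by positivity)] at h1; nlinarith
  -- upper bound on ψ for small t
  obtain ⟨δ₁, hδ₁0, hδ₁1, hup⟩ := psi_upper hnn hx hsum hmean hε0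
  -- lower bound on ψ for small t
  set δ₂ : ℝ := min 1 (min (1 / (ρ + ε)) (ε / (ρ + ε) ^ 2)) with hδ₂def
  have hδ₂0 : 0 < δ₂ := lt_min one_pos (lt_min (by positivity) (by positivity))
  have hlowexp : ∀ t : ℝ, 0 ≤ t → t ≤ δ₂ →
      Real.exp (-((ρ + ε) * t)) ≤ ∑' i : ℕ, x i * (1 - t) ^ i := by
    intro t ht0 htδ
    have ht1 : t ≤ 1 := htδ.trans (min_le_left _ _)
    have htu : (ρ + ε) * t ≤ 1 := by
      have h1 : t ≤ 1 / (ρ + ε) := htδ.trans ((min_le_right _ _).trans (min_le_left _ _))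
      rw [le_div_iff₀ (by positivity)] at h1; linarith
    have hte : (ρ + ε) ^ 2 * t ≤ ε := by
      have h1 : t ≤ ε / (ρ + ε) ^ 2 := htδ.trans ((min_le_right _ _).trans (min_le_right _ _))
      rw [le_div_iff₀ (by positivity)] at h1; linarith
    have h2 : Real.exp (-((ρ + ε) * t)) ≤ 1 - ρ * t := by
      have h3 := exp_quad (u := (ρ + ε) * t) (by positivity) htu
      nlinarith [mul_le_mul_of_nonneg_right hte ht0]
    exact h2.trans (psi_lower hnn hx hsum hmean ht0 ht1)
  obtain ⟨K, hK⟩ := hneg (min δ₁ δ₂) (lt_min hδ₁0 hδ₂0)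
  refine ⟨max K 1, fun k hk => ?_⟩
  have hk1 : 1 ≤ k := le_trans (le_max_right K 1) hk
  have hkK : K ≤ k := le_trans (le_max_left K 1) hk
  have ha0 : ∀ j : Fin k, 0 ≤ a k j := fun j => (ha01 k j).1
  have haδ : ∀ j : Fin k, a k j ≤ min δ₁ δ₂ := by
    intro j
    have h1 := hK k hkK j
    rw [abs_of_nonneg (ha0 j)] at h1
    exact h1.le
  have hψnn : ∀ j : Fin k, 0 ≤ ∑' i : ℕ, x i * (1 - a k j) ^ i := by
    intro j
    refine tsum_nonneg fun i => mul_nonneg (hnn i) (pow_nonneg ?_ i)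
    have := (ha01 k j).2; linarith
  have hub : ∀ j : Fin k, ∑' i : ℕ, x i * (1 - a k j) ^ i ≤ Real.exp (-((ρ - ε) * a k j)) := by
    intro j
    have h1 := hup (a k j) (ha0 j) ((haδ j).trans (min_le_left _ _))
    have h2 := Real.add_one_le_exp (-((ρ - ε) * a k j))
    nlinarith
  have hlb : ∀ j : Fin k, Real.exp (-((ρ + ε) * a k j)) ≤ ∑' i : ℕ, x i * (1 - a k j) ^ i :=
    fun j => hlowexp (a k j) (ha0 j) ((haδ j).trans (min_le_right _ _))
  have hPub : (∏ j : Fin k, ∑' i : ℕ, x i * (1 - a k j) ^ i) ≤ Real.exp (-((ρ - ε) * s)) := by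
    calc (∏ j : Fin k, ∑' i : ℕ, x i * (1 - a k j) ^ i)
        ≤ ∏ j : Fin k, Real.exp (-((ρ - ε) * a k j)) :=
          Finset.prod_le_prod (fun j _ => hψnn j) (fun j _ => hub j)
      _ = Real.exp (∑ j : Fin k, -((ρ - ε) * a k j)) := (Real.exp_sum _ _).symm
      _ = Real.exp (-((ρ - ε) * s)) := by
          rw [Finset.sum_neg_distrib, ← Finset.mul_sum, hrow k hk1]
  have hPlb : Real.exp (-((ρ + ε) * s)) ≤ ∏ j : Fin k, ∑' i : ℕ, x i * (1 - a k j) ^ i := by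
    calc Real.exp (-((ρ + ε) * s))
        = Real.exp (∑ j : Fin k, -((ρ + ε) * a k j)) := by
          rw [Finset.sum_neg_distrib, ← Finset.mul_sum, hrow k hk1]
      _ = ∏ j : Fin k, Real.exp (-((ρ + ε) * a k j)) := Real.exp_sum _ _
      _ ≤ ∏ j : Fin k, ∑' i : ℕ, x i * (1 - a k j) ^ i :=
          Finset.prod_le_prod (fun j _ => (Real.exp_pos _).le) (fun j _ => hlb j)
  -- translate the two exponential bounds
  have hEub : Real.exp (-((ρ - ε) * s)) = L * Real.exp (s * ε) := by
    rw [hLdef, ← Real.exp_add]; congr 1; ring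
  have hElb : Real.exp (-((ρ + ε) * s)) = L * Real.exp (-(s * ε)) := by
    rw [hLdef, ← Real.exp_add]; congr 1; ring
  rw [Real.dist_eq, abs_sub_lt_iff]
  have he1 : Real.exp (s * ε) - 1 ≤ s * ε * Real.exp (s * ε) := by
    have h1 := Real.add_one_le_exp (-(s * ε))
    have h2 := mul_le_mul_of_nonneg_left h1 (Real.exp_pos (s * ε)).le
    rw [← Real.exp_add] at h2
    simp only [add_neg_cancel, Real.exp_zero] at h2
    nlinarith
  have he2 : Real.exp (s * ε) ≤ 3 := by
    calc Real.exp (s * ε) ≤ Real.exp 1 := Real.exp_le_exp.2 hεs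
      _ ≤ 3 := by linarith [Real.exp_one_lt_d9]
  have he3 : 1 - Real.exp (-(s * ε)) ≤ s * ε := by
    have := Real.add_one_le_exp (-(s * ε)); linarith
  have he4 : (1:ℝ) ≤ Real.exp (s * ε) := Real.one_le_exp (by positivity)
  have hsε0 : 0 ≤ s * ε := by positivity
  constructor
  · have := hPub
    rw [hEub] at this
    nlinarith
  · have := hPlb
    rw [hElb] at this
    nlinarith [(Real.exp_pos (-(s * ε))).le]
end

section
/- Consider iteratively refined partitions Pi_k of the interval [0, ns], where Pi_n consists of the n intervals of length s, and Pi_{k+1} arises from Pi_k by splitting one element [a, b) into [a, (a+b)/2) and [(a+b)/2, b) chosen uniformly at random. Then almost surely max over pi in Pi_k of the length |pi| tends to 0 as k -> infinity. -/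
/-!
Let `S` be the sum of the squared element lengths. Bisecting an element of length `b` lowers `S`
by `b² / 2`, and that element is chosen with probability `count b / k`, so
`E[S_{k+1}] ≤ (1 - 1 / (2k)) E[S_k]`. Since `∑ 1 / (2k)` diverges, `E[S_k] → 0`. Along every
path `S_k` is non-increasing, so Markov's inequality upgrades this to `S_k → 0` almost surely,
and the largest element is at most `√S_k`.

As `M` need not be measurable, expectations are taken as finite sums over the finitely many
reachable states, so that only monotonicity and subadditivity of `μ` enter.
-/

open MeasureTheory Filter ENNReal Finset Topology

theorem tendsto_zero_of_le_one_sub_mul {t a : ℕ → ℝ} (ht : ∀ j, 0 ≤ t j) (ha : ∀ j, 0 ≤ a j)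
    (hstep : ∀ j, t (j + 1) ≤ (1 - a j) * t j) (hdiv : ¬ Summable a) :
    Tendsto t atTop (𝓝 0) := by
  have hanti : Antitone t :=
    antitone_nat_of_succ_le fun j => by nlinarith [ha j, ht j, hstep j]
  have htelescope : ∀ N, ∑ j ∈ range N, a j * t j ≤ t 0 - t N := by
    intro N
    induction N with
    | zero => simp
    | succ N ih => rw [sum_range_succ]; linarith [hstep N]
  have hsum : Summable fun j => a j * t j :=
    summable_of_sum_range_le (fun j => mul_nonneg (ha j) (ht j))
      fun N => (htelescope N).trans (sub_le_self _ (ht N))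
  have hbdd : BddBelow (Set.range t) := ⟨0, Set.forall_mem_range.2 ht⟩
  have hlim := tendsto_atTop_ciInf hanti hbdd
  suffices hL : ⨅ j, t j = 0 by rwa [hL] at hlim
  by_contra hL
  have hLpos : 0 < ⨅ j, t j := lt_of_le_of_ne (le_ciInf ht) (Ne.symm hL)
  -- `a` would be summable, being dominated by the summable `a j * t j / inf t`
  refine hdiv ((summable_mul_left_iff hLpos.ne').1 (hsum.of_nonneg_of_le
    (fun j => mul_nonneg hLpos.le (ha j)) fun j => ?_))
  rw [mul_comm]
  exact mul_le_mul_of_nonneg_left (ciInf_le hbdd j) (ha j)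

theorem ENNReal.tendsto_zero_of_le_ofReal_one_sub_mul {T : ℕ → ℝ≥0∞} {a : ℕ → ℝ}
    (hT : ∀ j, T j ≠ ∞) (ha : ∀ j, 0 ≤ a j) (ha1 : ∀ j, a j ≤ 1)
    (hstep : ∀ j, T (j + 1) ≤ ENNReal.ofReal (1 - a j) * T j) (hdiv : ¬ Summable a) :
    Tendsto T atTop (𝓝 0) := by
  rw [← ENNReal.tendsto_toReal_iff hT zero_ne_top, ENNReal.toReal_zero]
  refine tendsto_zero_of_le_one_sub_mul (fun j => toReal_nonneg) ha (fun j => ?_) hdiv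
  have := ENNReal.toReal_mono (mul_ne_top ofReal_ne_top (hT j)) (hstep j)
  rwa [toReal_mul, toReal_ofReal (sub_nonneg.2 (ha1 j))] at this

theorem not_summable_one_div_two_mul_natCast_add (n : ℕ) :
    ¬ Summable fun j : ℕ => 1 / (2 * ((n + j : ℕ) : ℝ)) := by
  intro h
  have : Summable fun j : ℕ => 1 / ((j + n : ℕ) : ℝ) := by
    refine (h.mul_left 2).congr fun j => ?_
    rw [add_comm j n]
    rcases eq_or_ne ((n + j : ℕ) : ℝ) 0 with h0 | h0
    · simp [h0]
    · field_simp
  exact Real.not_summable_one_div_natCast ((summable_nat_add_iff n).1 this)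

namespace MeasureTheory

variable {Ω α : Type*} [MeasurableSpace Ω] {μ : Measure Ω}

theorem measure_le_sum_measure_inter {X : Ω → α} {R : Finset α} (hX : ∀ᵐ ω ∂μ, X ω ∈ R)
    (t : Set Ω) : μ t ≤ ∑ a ∈ R, μ ({ω | X ω = a} ∩ t) := by
  refine (measure_mono_ae ?_).trans (measure_biUnion_finset_le R _)
  filter_upwards [hX] with ω hω ht
  exact Set.mem_biUnion hω ⟨rfl, ht⟩

theorem ofReal_mul_measure_le_sum {X : Ω → α} {R : Finset α} (hX : ∀ᵐ ω ∂μ, X ω ∈ R)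
    (f : α → ℝ) (δ : ℝ) :
    ENNReal.ofReal δ * μ {ω | δ ≤ f (X ω)} ≤ ∑ a ∈ R, ENNReal.ofReal (f a) * μ {ω | X ω = a} := by
  refine (mul_le_mul_right (measure_le_sum_measure_inter hX _) _).trans ?_
  rw [mul_sum]
  refine sum_le_sum fun a _ => ?_
  by_cases h : δ ≤ f a
  · exact mul_le_mul' (ofReal_le_ofReal h) (measure_mono Set.inter_subset_left)
  · have : μ ({ω | X ω = a} ∩ {ω | δ ≤ f (X ω)}) = 0 :=
      measure_mono_null (fun ω ⟨hXa, hδ⟩ => h (hXa ▸ hδ)) measure_empty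
    rw [this, mul_zero]
    exact zero_le

theorem tendsto_measure_le_of_tendsto_sum {X : ℕ → Ω → α} {R : ℕ → Finset α}
    (hX : ∀ j, ∀ᵐ ω ∂μ, X j ω ∈ R j) (f : α → ℝ)
    (hf : Tendsto (fun j => ∑ a ∈ R j, ENNReal.ofReal (f a) * μ {ω | X j ω = a}) atTop (𝓝 0))
    {δ : ℝ} (hδ : 0 < δ) : Tendsto (fun j => μ {ω | δ ≤ f (X j ω)}) atTop (𝓝 0) := by
  have hδ' : ENNReal.ofReal δ ≠ 0 := (ofReal_pos.2 hδ).ne'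
  refine tendsto_of_tendsto_of_tendsto_of_le_of_le tendsto_const_nhds
    (by simpa using ENNReal.Tendsto.const_mul hf (Or.inr (inv_ne_top.2 hδ')))
    (fun _ => zero_le) fun j => ?_
  rw [← ENNReal.mul_le_iff_le_inv hδ' ofReal_ne_top]
  exact ofReal_mul_measure_le_sum (hX j) f δ

theorem ae_tendsto_zero_of_antitone_of_tendsto_measure {Y : ℕ → Ω → ℝ} (hY : ∀ j ω, 0 ≤ Y j ω)
    (hanti : ∀ᵐ ω ∂μ, Antitone fun j => Y j ω)
    (hprob : ∀ δ > 0, Tendsto (fun j => μ {ω | δ ≤ Y j ω}) atTop (𝓝 0)) :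
    ∀ᵐ ω ∂μ, Tendsto (fun j => Y j ω) atTop (𝓝 0) := by
  have hsmall : ∀ δ > 0, ∀ᵐ ω ∂μ, ∃ j, Y j ω < δ := fun δ hδ => by
    simp_rw [ae_iff, not_exists, not_lt]
    exact nonpos_iff_eq_zero.1
      (ge_of_tendsto' (hprob δ hδ) fun j => measure_mono fun ω hω => hω j)
  filter_upwards [hanti, ae_all_iff.2 fun c : ℕ => hsmall (1 / (c + 1)) (by positivity)]
    with ω hanti hsmall
  refine Metric.tendsto_atTop.2 fun ε hε => ?_
  obtain ⟨c, hc⟩ := exists_nat_one_div_lt hε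
  obtain ⟨N, hN⟩ := hsmall c
  refine ⟨N, fun j hj => ?_⟩
  rw [Real.dist_0_eq_abs, abs_of_nonneg (hY j ω)]
  exact (hanti hj).trans_lt (hN.trans hc)

end MeasureTheory

namespace RandomBisection

noncomputable def bisect (m : Multiset ℝ) (b : ℝ) : Multiset ℝ := b / 2 ::ₘ b / 2 ::ₘ m.erase b

def sumSq (m : Multiset ℝ) : ℝ := (m.map (· ^ 2)).sum

theorem sumSq_cons (a : ℝ) (m : Multiset ℝ) : sumSq (a ::ₘ m) = a ^ 2 + sumSq m := by
  simp [sumSq]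

theorem sumSq_nonneg (m : Multiset ℝ) : 0 ≤ sumSq m :=
  Multiset.sum_nonneg fun x hx => by
    obtain ⟨b, -, rfl⟩ := Multiset.mem_map.1 hx
    positivity

theorem sq_le_sumSq {m : Multiset ℝ} {b : ℝ} (hb : b ∈ m) : b ^ 2 ≤ sumSq m := by
  rw [← Multiset.cons_erase hb, sumSq_cons]
  linarith [sumSq_nonneg (m.erase b)]

theorem sumSq_bisect {m : Multiset ℝ} {b : ℝ} (hb : b ∈ m) :
    sumSq (bisect m b) = sumSq m - b ^ 2 / 2 := by
  conv_rhs => rw [← Multiset.cons_erase hb, sumSq_cons]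
  rw [bisect, sumSq_cons, sumSq_cons]
  ring

theorem sumSq_bisect_le {m : Multiset ℝ} {b : ℝ} (hb : b ∈ m) :
    sumSq (bisect m b) ≤ sumSq m := by
  rw [sumSq_bisect hb]
  linarith [sq_nonneg b]

theorem card_bisect {m : Multiset ℝ} {b : ℝ} (hb : b ∈ m) :
    Multiset.card (bisect m b) = Multiset.card m + 1 := by
  have := Multiset.card_pos_iff_exists_mem.2 ⟨b, hb⟩
  rw [bisect, Multiset.card_cons, Multiset.card_cons, Multiset.card_erase_of_mem hb,
    Nat.pred_eq_sub_one]
  omega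

theorem sum_count_div_card_mul_sumSq_bisect (m : Multiset ℝ) :
    ∑ b ∈ m.toFinset, (m.count b : ℝ) / Multiset.card m * sumSq (bisect m b)
      = (1 - 1 / (2 * Multiset.card m)) * sumSq m := by
  rcases eq_or_ne m 0 with rfl | hm
  · simp [sumSq]
  have hcard : (Multiset.card m : ℝ) ≠ 0 := by simpa using hm
  have hcount : ∑ b ∈ m.toFinset, (m.count b : ℝ) = Multiset.card m := by
    exact_mod_cast Multiset.toFinset_sum_count_eq m
  have hsq : ∑ b ∈ m.toFinset, (m.count b : ℝ) * b ^ 2 = sumSq m := by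
    simp [sumSq, Finset.sum_multiset_map_count]
  calc ∑ b ∈ m.toFinset, (m.count b : ℝ) / Multiset.card m * sumSq (bisect m b)
      = ∑ b ∈ m.toFinset, ((m.count b : ℝ) / Multiset.card m * sumSq m
          - (m.count b : ℝ) * b ^ 2 / (2 * Multiset.card m)) :=
        sum_congr rfl fun b hb => by rw [sumSq_bisect (Multiset.mem_toFinset.1 hb)]; ring
    _ = (1 - 1 / (2 * Multiset.card m)) * sumSq m := by
        rw [sum_sub_distrib, ← sum_mul, ← sum_div, ← sum_div, hcount, hsq]
        field_simp

theorem abs_sSup_le_sqrt_sumSq (m : Multiset ℝ) : |sSup {b : ℝ | b ∈ m}| ≤ √(sumSq m) := by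
  rcases Multiset.empty_or_exists_mem m with rfl | ⟨b, hb⟩
  · simp
  have hmem : sSup {b : ℝ | b ∈ m} ∈ {b : ℝ | b ∈ m} :=
    Set.Nonempty.csSup_mem ⟨b, hb⟩ m.finite_toSet
  exact Real.abs_le_sqrt (sq_le_sumSq hmem)

/-- `reachable s n j` contains every value the partition can take at time `n + j`. -/
noncomputable def reachable (s : ℝ) (n : ℕ) : ℕ → Finset (Multiset ℝ)
  | 0 => {Multiset.replicate n s}
  | j + 1 => (reachable s n j).biUnion fun m => m.toFinset.image (bisect m)

theorem bisect_mem_reachable {s : ℝ} {n j : ℕ} {m : Multiset ℝ} (hm : m ∈ reachable s n j)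
    {b : ℝ} (hb : b ∈ m) : bisect m b ∈ reachable s n (j + 1) :=
  mem_biUnion.2 ⟨m, hm, mem_image_of_mem _ (Multiset.mem_toFinset.2 hb)⟩

theorem card_of_mem_reachable {s : ℝ} {n j : ℕ} {m : Multiset ℝ} (hm : m ∈ reachable s n j) :
    Multiset.card m = n + j := by
  induction j generalizing m with
  | zero =>
    rw [reachable, mem_singleton] at hm
    simp [hm]
  | succ j ih =>
    obtain ⟨m', hm', hm⟩ := mem_biUnion.1 hm
    obtain ⟨b, hb, rfl⟩ := mem_image.1 hm
    rw [card_bisect (Multiset.mem_toFinset.1 hb), ih hm', add_assoc]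

variable {Ω : Type*} [MeasurableSpace Ω] {μ : Measure Ω}

theorem sum_ofReal_sumSq_mul_measure_bisect_le {X Y : Ω → Multiset ℝ} {m : Multiset ℝ}
    (R' : Finset (Multiset ℝ)) (hstep : ∀ᵐ ω ∂μ, ∃ b ∈ X ω, Y ω = bisect (X ω) b)
    (hunif : ∀ b ∈ m, μ {ω | X ω = m ∧ Y ω = bisect m b}
      = (m.count b : ℝ≥0∞) / (Multiset.card m : ℝ≥0∞) * μ {ω | X ω = m}) :
    ∑ m' ∈ R', ENNReal.ofReal (sumSq m') * μ {ω | X ω = m ∧ Y ω = m'}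
      ≤ ENNReal.ofReal ((1 - 1 / (2 * Multiset.card m)) * sumSq m) * μ {ω | X ω = m} := by
  have hnull : ∀ m' ∉ m.toFinset.image (bisect m), μ {ω | X ω = m ∧ Y ω = m'} = 0 := by
    refine fun m' hm' => measure_mono_null ?_ (ae_iff.1 hstep)
    rintro ω ⟨hX, hY⟩ ⟨b, hb, hYb⟩
    exact hm' (mem_image.2 ⟨b, Multiset.mem_toFinset.2 (hX ▸ hb), by rw [← hX, ← hYb, hY]⟩)
  calc ∑ m' ∈ R', ENNReal.ofReal (sumSq m') * μ {ω | X ω = m ∧ Y ω = m'}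
      ≤ ∑ m' ∈ m.toFinset.image (bisect m),
          ENNReal.ofReal (sumSq m') * μ {ω | X ω = m ∧ Y ω = m'} :=
        sum_le_sum_of_ne_zero fun m' _ h => by_contra fun hm' => h (by rw [hnull m' hm', mul_zero])
    _ ≤ ∑ b ∈ m.toFinset,
          ENNReal.ofReal (sumSq (bisect m b)) * μ {ω | X ω = m ∧ Y ω = bisect m b} :=
        sum_image_le_of_nonneg fun _ _ => zero_le
    _ = ∑ b ∈ m.toFinset, ENNReal.ofReal ((m.count b : ℝ) / Multiset.card m
          * sumSq (bisect m b)) * μ {ω | X ω = m} := by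
        refine sum_congr rfl fun b hb => ?_
        have hcard : (0 : ℝ) < Multiset.card m :=
          Nat.cast_pos.2 (Multiset.card_pos_iff_exists_mem.2 ⟨b, Multiset.mem_toFinset.1 hb⟩)
        rw [hunif b (Multiset.mem_toFinset.1 hb), ENNReal.ofReal_mul (by positivity),
          ofReal_div_of_pos hcard, ofReal_natCast, ofReal_natCast]
        ring
    _ = ENNReal.ofReal ((1 - 1 / (2 * Multiset.card m)) * sumSq m) * μ {ω | X ω = m} := by
        rw [← sum_mul, ← ofReal_sum_of_nonneg fun b _ =>
          mul_nonneg (by positivity) (sumSq_nonneg _), sum_count_div_card_mul_sumSq_bisect]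

theorem sum_ofReal_sumSq_mul_measure_succ_le {X Y : Ω → Multiset ℝ} {k : ℕ}
    {R : Finset (Multiset ℝ)} (R' : Finset (Multiset ℝ)) (hX : ∀ᵐ ω ∂μ, X ω ∈ R)
    (hcard : ∀ m ∈ R, Multiset.card m = k) (hstep : ∀ᵐ ω ∂μ, ∃ b ∈ X ω, Y ω = bisect (X ω) b)
    (hunif : ∀ m : Multiset ℝ, ∀ b ∈ m, μ {ω | X ω = m ∧ Y ω = bisect m b}
      = (m.count b : ℝ≥0∞) / (k : ℝ≥0∞) * μ {ω | X ω = m}) :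
    ∑ m' ∈ R', ENNReal.ofReal (sumSq m') * μ {ω | Y ω = m'}
      ≤ ENNReal.ofReal (1 - 1 / (2 * k))
          * ∑ m ∈ R, ENNReal.ofReal (sumSq m) * μ {ω | X ω = m} := by
  calc ∑ m' ∈ R', ENNReal.ofReal (sumSq m') * μ {ω | Y ω = m'}
      ≤ ∑ m' ∈ R', ENNReal.ofReal (sumSq m')
          * ∑ m ∈ R, μ ({ω | X ω = m} ∩ {ω | Y ω = m'}) :=
        sum_le_sum fun m' _ => mul_le_mul_right (measure_le_sum_measure_inter hX _) _
    _ = ∑ m ∈ R, ∑ m' ∈ R', ENNReal.ofReal (sumSq m') * μ {ω | X ω = m ∧ Y ω = m'} := by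
        simp_rw [mul_sum]
        exact sum_comm
    _ ≤ ∑ m ∈ R, ENNReal.ofReal ((1 - 1 / (2 * k)) * sumSq m) * μ {ω | X ω = m} :=
        sum_le_sum fun m hm => by
          have h := sum_ofReal_sumSq_mul_measure_bisect_le (m := m) R' hstep
            fun b hb => by rw [hcard m hm]; exact hunif m b hb
          rwa [hcard m hm] at h
    _ = ENNReal.ofReal (1 - 1 / (2 * k))
          * ∑ m ∈ R, ENNReal.ofReal (sumSq m) * μ {ω | X ω = m} := by
        simp_rw [mul_sum, ENNReal.ofReal_mul' (sumSq_nonneg _), mul_assoc]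

theorem ae_mem_reachable {s : ℝ} {n : ℕ} {M : ℕ → Ω → Multiset ℝ}
    (hinit : ∀ ω, M n ω = Multiset.replicate n s)
    (hstep : ∀ k ≥ n, ∀ᵐ ω ∂μ, ∃ b ∈ M k ω, M (k + 1) ω = bisect (M k ω) b) (j : ℕ) :
    ∀ᵐ ω ∂μ, M (n + j) ω ∈ reachable s n j := by
  induction j with
  | zero => exact ae_of_all _ fun ω => by simp [reachable, hinit ω]
  | succ j ih =>
    filter_upwards [ih, hstep (n + j) (Nat.le_add_right n j)] with ω hω ⟨b, hb, hbisect⟩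
    rw [← add_assoc, hbisect]
    exact bisect_mem_reachable hω hb

theorem ae_antitone_sumSq {n : ℕ} {M : ℕ → Ω → Multiset ℝ}
    (hstep : ∀ k ≥ n, ∀ᵐ ω ∂μ, ∃ b ∈ M k ω, M (k + 1) ω = bisect (M k ω) b) :
    ∀ᵐ ω ∂μ, Antitone fun j => sumSq (M (n + j) ω) := by
  filter_upwards [ae_all_iff.2 fun j => hstep (n + j) (Nat.le_add_right n j)] with ω hω
  refine antitone_nat_of_succ_le fun j => ?_
  obtain ⟨b, hb, hbisect⟩ := hω j
  rw [← add_assoc, hbisect]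
  exact sumSq_bisect_le hb

end RandomBisection

theorem stmt13_general {Ω : Type*} [MeasurableSpace Ω] (μ : Measure Ω) [IsProbabilityMeasure μ]
    (s : ℝ) (n : ℕ)
    (M : ℕ → Ω → Multiset ℝ)
    (hinit : ∀ ω, M n ω = Multiset.replicate n s)
    (hstep : ∀ k ≥ n, ∀ᵐ ω ∂μ, ∃ b ∈ M k ω,
      M (k + 1) ω = b / 2 ::ₘ b / 2 ::ₘ (M k ω).erase b)
    (hunif : ∀ k ≥ n, ∀ m : Multiset ℝ, ∀ b ∈ m,
      μ {ω | M k ω = m ∧ M (k + 1) ω = b / 2 ::ₘ b / 2 ::ₘ m.erase b}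
        = ((m.count b : ℝ≥0∞) / (k : ℝ≥0∞)) * μ {ω | M k ω = m}) :
    ∀ᵐ ω ∂μ, Tendsto (fun k : ℕ => sSup {b : ℝ | b ∈ M k ω}) atTop (nhds 0) := by
  open RandomBisection in
  have hreach := ae_mem_reachable hinit hstep
  -- the sum is the expectation of `sumSq (M (n + j))`
  have hT : Tendsto (fun j => ∑ m ∈ reachable s n j,
      ENNReal.ofReal (sumSq m) * μ {ω | M (n + j) ω = m}) atTop (𝓝 0) :=
    ENNReal.tendsto_zero_of_le_ofReal_one_sub_mul
      (fun j => ENNReal.sum_ne_top.2 fun m _ => mul_ne_top ofReal_ne_top (measure_ne_top μ _))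
      (fun j => by positivity)
      (fun j => by simpa using Nat.cast_inv_le_one (α := ℝ) (2 * (n + j)))
      (fun j => sum_ofReal_sumSq_mul_measure_succ_le _ (hreach j)
        (fun m => card_of_mem_reachable) (hstep (n + j) (Nat.le_add_right n j))
        (hunif (n + j) (Nat.le_add_right n j)))
      (not_summable_one_div_two_mul_natCast_add n)
  filter_upwards [ae_tendsto_zero_of_antitone_of_tendsto_measure (fun j ω => sumSq_nonneg _)
    (ae_antitone_sumSq hstep) fun δ hδ => tendsto_measure_le_of_tendsto_sum hreach sumSq hT hδ]
    with ω hω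
  rw [← tendsto_add_atTop_iff_nat n]
  refine squeeze_zero_norm (fun j => ?_) (by simpa using hω.sqrt)
  rw [Real.norm_eq_abs, add_comm]
  exact abs_sSup_le_sqrt_sumSq _

/-- in the random bisection scheme, where the partition `Π_k` of `[0, ns]` has
`k` elements (represented by the multiset `M k ω` of their lengths), starts with `n` intervals
of length `s`, and at each step a uniformly chosen element `b` is replaced by two copies of
`b/2`, the maximal element length tends to `0` almost surely. -/
theorem stmt13 {Ω : Type*} [MeasurableSpace Ω] (μ : Measure Ω) [IsProbabilityMeasure μ]
    (s : ℝ) (hs : 0 < s) (n : ℕ) (hn : 1 ≤ n)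
    (M : ℕ → Ω → Multiset ℝ)
    (hcard : ∀ k ≥ n, ∀ ω, Multiset.card (M k ω) = k)
    (hinit : ∀ ω, M n ω = Multiset.replicate n s)
    (hstep : ∀ k ≥ n, ∀ᵐ ω ∂μ, ∃ b ∈ M k ω,
      M (k + 1) ω = b / 2 ::ₘ b / 2 ::ₘ (M k ω).erase b)
    (hunif : ∀ k ≥ n, ∀ m : Multiset ℝ, ∀ b ∈ m,
      μ {ω | M k ω = m ∧ M (k + 1) ω = b / 2 ::ₘ b / 2 ::ₘ m.erase b}
        = ((m.count b : ℝ≥0∞) / (k : ℝ≥0∞)) * μ {ω | M k ω = m}) :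
    ∀ᵐ ω ∂μ, Tendsto (fun k : ℕ => sSup {b : ℝ | b ∈ M k ω}) atTop (nhds 0) :=
  stmt13_general μ s n M hinit hstep hunif
end
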